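/- Discretization consistency: define a_t, b_t, c_t, η_t as in the paper: b_t = √(σ_{t−Δt}² σ̄_{t−Δt}² − η_t² σ_T²)/(σ_t σ̄_t), a_t = σ̄_{t−Δt}²/σ_T² − (σ̄_t²/σ_T²) b_t, c_t = σ_{t−Δt}²/σ_T² − (σ_t²/σ_T²) b_t, where 0 ≤ η_t ≤ σ_{t−Δt}σ̄_{t−Δt}/σ_T. Then a_t + b_t + c_t = 1. Moreover, if X_t has mean (σ̄_t²/σ_T²)X₀ + (σ_t²/σ_T²)X_FBP and covariance (σ_t²σ̄_t²/σ_T²)I conditionally on (X₀, X_FBP), and if X̂₀,p^{(t)} = X₀, then X_{t−Δt} = a_t X₀ + b_t X_t + c_t X_FBP + η_t ε with ε ∼ N(0,I) independent of X_t has mean (σ̄_{t−Δt}²/σ_T²)X₀ + (σ_{t−Δt}²/σ_T²)X_FBP and covariance (σ_{t−Δt}² σ̄_{t−Δt}²/σ_T²)I. -/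

import Mathlib

/-- Discretization consistency of the update rule
`X_{t−Δt} = a_t X̂₀ + b_t X_t + c_t X_FBP + η_t ε`: the coefficients sum to one, and when
`X̂₀,p = X₀` the update preserves the conditional mean
`(σ̄_{t−Δt}²/σ_T²)X₀ + (σ_{t−Δt}²/σ_T²)X_FBP` and the conditional variance
`σ_{t−Δt}²σ̄_{t−Δt}²/σ_T²` of the forward bridge kernel (the variance of
`b_t X_t + η_t ε` with `Var X_t = σ_t²σ̄_t²/σ_T²` and `ε ∼ N(0,I)` independent is
`b_t²σ_t²σ̄_t²/σ_T² + η_t²`). -/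
theorem stmt13 (d : ℕ) (sp sbp s sb sT η : ℝ)
    (hsp : 0 < sp) (hsbp : 0 < sbp) (hs : 0 < s) (hsb : 0 < sb) (hsT : 0 < sT)
    (hTp : sp ^ 2 + sbp ^ 2 = sT ^ 2) (hT : s ^ 2 + sb ^ 2 = sT ^ 2)
    (hη0 : 0 ≤ η) (hηmax : η ≤ sp * sbp / sT)
    (a b c : ℝ)
    (hb : b = Real.sqrt (sp ^ 2 * sbp ^ 2 - η ^ 2 * sT ^ 2) / (s * sb))
    (ha : a = sbp ^ 2 / sT ^ 2 - (sb ^ 2 / sT ^ 2) * b)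
    (hc : c = sp ^ 2 / sT ^ 2 - (s ^ 2 / sT ^ 2) * b) :
    a + b + c = 1 ∧
      (∀ X₀ XFBP : EuclideanSpace ℝ (Fin d),
        a • X₀ + b • ((sb ^ 2 / sT ^ 2) • X₀ + (s ^ 2 / sT ^ 2) • XFBP) + c • XFBP =
          (sbp ^ 2 / sT ^ 2) • X₀ + (sp ^ 2 / sT ^ 2) • XFBP) ∧
      b ^ 2 * (s ^ 2 * sb ^ 2 / sT ^ 2) + η ^ 2 = sp ^ 2 * sbp ^ 2 / sT ^ 2 := by
  have hT2 : (0:ℝ) < sT ^ 2 := by positivity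
  have harg : 0 ≤ sp ^ 2 * sbp ^ 2 - η ^ 2 * sT ^ 2 := by
    have h1 : η * sT ≤ sp * sbp := by
      rw [div_eq_mul_inv] at hηmax
      calc η * sT ≤ sp * sbp * sT⁻¹ * sT := by nlinarith
        _ = sp * sbp := by field_simp
    nlinarith [mul_nonneg hη0 hsT.le]
  have hb2 : b ^ 2 = (sp ^ 2 * sbp ^ 2 - η ^ 2 * sT ^ 2) / (s ^ 2 * sb ^ 2) := by
    rw [hb, div_pow, Real.sq_sqrt harg]; ring_nf
  refine ⟨?_, ?_, ?_⟩
  · rw [ha, hc]; field_simp; linear_combination hTp - b * hT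
  · intro X₀ XFBP
    rw [ha, hc]
    module
  · rw [hb2]; field_simp; ring
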